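/- Let L = h²∂² + 2u with u ∈ R. For every A ∈ Ψ(R) there exists a unique Y ∈ Ψ(R) such that Y · L^{1/2} + L^{1/2} · Y = A. In particular, if A = −2c with c ∈ R satisfying ∂c = 0, the unique solution is Y = −c L^{−1/2}. -/

import Mathlib

open scoped BigOperators

/-- Generalized binomial coefficient `C(k,l) = k(k-1)⋯(k-l+1)/l!` for `k : ℤ`. -/
def gbinom (k : ℤ) (l : ℕ) : ℚ :=
  (∏ i ∈ Finset.range l, ((k : ℚ) - i)) / (Nat.factorial l)

/-- Pseudo-differential operators (and symbols): coefficient functions `ℤ → R`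
with support bounded above.  The parameter `d` (the derivation) determines the product. -/
structure PDO (R : Type) [CommRing R] [Algebra ℚ R] (d : R →+ R) where
  coeff : ℤ → R
  bdd : ∃ N : ℤ, ∀ n : ℤ, N < n → coeff n = 0

namespace PDO

variable {R : Type} [CommRing R] [Algebra ℚ R] {d : R →+ R}

theorem ext' {A B : PDO R d} (h : A.coeff = B.coeff) : A = B := by
  cases A; cases B; cases h; rfl

set_option linter.unusedSectionVars false in
theorem iterD_zero (d : R →+ R) (j : ℕ) : d^[j] (0 : R) = 0 := by
  induction j with
  | zero => rfl
  | succ j ih => rw [Function.iterate_succ_apply', ih, map_zero]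

instance : Zero (PDO R d) := ⟨⟨fun _ => 0, ⟨0, fun _ _ => rfl⟩⟩⟩

instance : One (PDO R d) :=
  ⟨⟨fun n => if n = 0 then 1 else 0, ⟨0, fun n hn => if_neg (by omega)⟩⟩⟩

instance : Add (PDO R d) :=
  ⟨fun A B => ⟨fun n => A.coeff n + B.coeff n, by
    obtain ⟨N, hN⟩ := A.bdd
    obtain ⟨M, hM⟩ := B.bdd
    exact ⟨max N M, fun n hn => by
      show A.coeff n + B.coeff n = 0
      rw [hN n (lt_of_le_of_lt (le_max_left N M) hn),
        hM n (lt_of_le_of_lt (le_max_right N M) hn), add_zero]⟩⟩⟩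

instance : Neg (PDO R d) :=
  ⟨fun A => ⟨fun n => -A.coeff n, by
    obtain ⟨N, hN⟩ := A.bdd
    exact ⟨N, fun n hn => by show -A.coeff n = 0; rw [hN n hn, neg_zero]⟩⟩⟩

instance : SMul ℚ (PDO R d) :=
  ⟨fun c A => ⟨fun n => c • A.coeff n, by
    obtain ⟨N, hN⟩ := A.bdd
    exact ⟨N, fun n hn => by show c • A.coeff n = 0; rw [hN n hn, smul_zero]⟩⟩⟩

instance : AddCommGroup (PDO R d) where
  add := (· + ·)
  zero := 0
  neg := Neg.neg
  add_assoc A B C := ext' (funext fun n => add_assoc (A.coeff n) (B.coeff n) (C.coeff n))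
  zero_add A := ext' (funext fun n => zero_add (A.coeff n))
  add_zero A := ext' (funext fun n => add_zero (A.coeff n))
  add_comm A B := ext' (funext fun n => add_comm (A.coeff n) (B.coeff n))
  neg_add_cancel A := ext' (funext fun n => neg_add_cancel (A.coeff n))
  nsmul := nsmulRec
  zsmul := zsmulRec

/-- The product of pseudo-differential operators, determined by the commutation rule
`∂^k · f = Σ_{l ≥ 0} C(k,l) (∂^l f) ∂^(k-l)`. -/
noncomputable instance : Mul (PDO R d) :=
  ⟨fun A B =>
    ⟨fun n => ∑ᶠ (k : ℤ) (m : ℤ),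
        if _ : 0 ≤ k + m - n then
          A.coeff k * (gbinom k (k + m - n).toNat • (d^[(k + m - n).toNat] (B.coeff m)))
        else 0, by
      obtain ⟨N, hN⟩ := A.bdd
      obtain ⟨M, hM⟩ := B.bdd
      refine ⟨N + M, fun n hn => ?_⟩
      have hz : ∀ k m : ℤ,
          (if _ : 0 ≤ k + m - n then
            A.coeff k * (gbinom k (k + m - n).toNat • (d^[(k + m - n).toNat] (B.coeff m)))
          else 0) = 0 := by
        intro k m
        by_cases hl : 0 ≤ k + m - n
        · rw [dif_pos hl]
          by_cases hk : N < k
          · rw [hN k hk, zero_mul]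
          · rw [hM m (by omega), iterD_zero, smul_zero, mul_zero]
        · rw [dif_neg hl]
      simp only [hz, finsum_zero]⟩⟩

noncomputable def npow (A : PDO R d) : ℕ → PDO R d
  | 0 => 1
  | n + 1 => npow A n * A

noncomputable instance : Pow (PDO R d) ℕ := ⟨fun A n => A.npow n⟩

/-- The monomial `r ∂^k`. -/
def mono (r : R) (k : ℤ) : PDO R d :=
  ⟨fun n => if n = k then r else 0, ⟨k, fun n hn => if_neg (by omega)⟩⟩

/-- The constant (order-zero) operator `r`. -/
def const (r : R) : PDO R d := mono r 0

/-- The operator `∂`. -/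
def del : PDO R d := mono (1 : R) 1

/-- The operator `h∂`. -/
def hdel (h : Rˣ) : PDO R d := mono (h : R) 1

/-- The Lax operator `L = h²∂² + 2u`. -/
def Lop (h : Rˣ) (u : R) : PDO R d :=
  ⟨fun n => if n = 2 then (h : R) ^ 2 else if n = 0 then 2 * u else 0,
   ⟨2, fun n hn => by
      show (if n = 2 then (h : R) ^ 2 else if n = 0 then 2 * u else 0) = 0
      rw [if_neg (by omega), if_neg (by omega)]⟩⟩

/-- The differential part `A₊`. -/
def pos (A : PDO R d) : PDO R d :=
  ⟨fun n => if 0 ≤ n then A.coeff n else 0, by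
    obtain ⟨N, hN⟩ := A.bdd
    refine ⟨N, fun n hn => ?_⟩
    show (if 0 ≤ n then A.coeff n else 0) = 0
    by_cases h0 : (0 : ℤ) ≤ n
    · rw [if_pos h0]; exact hN n hn
    · rw [if_neg h0]⟩

/-- The integral part `A₋ = A − A₊`. -/
def negp (A : PDO R d) : PDO R d :=
  ⟨fun n => if n < 0 then A.coeff n else 0, ⟨0, fun n hn => if_neg (by omega)⟩⟩

/-- The residue `Res_∂ A = a₋₁`. -/
def res (A : PDO R d) : R := A.coeff (-1)

/-- The formal adjoint, determined by `(f ∂^k)* = (−∂)^k · f`. -/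
noncomputable def adj (A : PDO R d) : PDO R d :=
  ⟨fun n => ∑ᶠ k : ℤ,
      if _ : 0 ≤ k - n then
        (((-1 : ℚ) ^ k) * gbinom k (k - n).toNat) • (d^[(k - n).toNat] (A.coeff k))
      else 0, by
    obtain ⟨N, hN⟩ := A.bdd
    refine ⟨N, fun n hn => ?_⟩
    have hz : ∀ k : ℤ, (if _ : 0 ≤ k - n then
        (((-1 : ℚ) ^ k) * gbinom k (k - n).toNat) • (d^[(k - n).toNat] (A.coeff k))
      else 0) = 0 := by
      intro k
      by_cases hl : 0 ≤ k - n
      · rw [dif_pos hl, hN k (by omega), iterD_zero, smul_zero]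
      · rw [dif_neg hl]
    simp only [hz, finsum_zero]⟩

/-- The operator `P(h∂) = Σ pₙ hⁿ ∂ⁿ` associated to the symbol `P(λ) = Σ pₙ λⁿ`. -/
noncomputable def ofSymbol (h : Rˣ) (A : PDO R d) : PDO R d :=
  ⟨fun n => A.coeff n * ((h ^ n : Rˣ) : R), by
    obtain ⟨N, hN⟩ := A.bdd
    exact ⟨N, fun n hn => by show A.coeff n * ((h ^ n : Rˣ) : R) = 0; rw [hN n hn, zero_mul]⟩⟩

/-- Apply `d^[i]` to each coefficient. -/
def mapD (i : ℕ) (A : PDO R d) : PDO R d :=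
  ⟨fun n => d^[i] (A.coeff n), by
    obtain ⟨N, hN⟩ := A.bdd
    exact ⟨N, fun n hn => by show d^[i] (A.coeff n) = 0; rw [hN n hn, iterD_zero]⟩⟩

/-- The coefficientwise extension of an additive map `D : R →+ R`. -/
def mapHom (D : R →+ R) (A : PDO R d) : PDO R d :=
  ⟨fun n => D (A.coeff n), by
    obtain ⟨N, hN⟩ := A.bdd
    exact ⟨N, fun n hn => by show D (A.coeff n) = 0; rw [hN n hn, map_zero]⟩⟩

/-- The commutator `[A, B] = AB − BA`. -/
noncomputable def comm (A B : PDO R d) : PDO R d := A * B - B * A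

end PDO

/-- The Leibniz rule: `d` is a derivation. -/
def Leibniz {R : Type} [CommRing R] [Algebra ℚ R] (d : R →+ R) : Prop :=
  ∀ a b : R, d (a * b) = a * d b + b * d a

/-- `aₙ = 1/(2n+1)!!`. -/
def kdvA (n : ℕ) : ℚ := 1 / (Nat.doubleFactorial (2 * n + 1))

/-- `bₙ = (2n−1)!!` (with `b₀ = (−1)!! = 1`). -/
def kdvB (n : ℕ) : ℚ := (Nat.doubleFactorial (2 * n - 1) : ℕ)

/-!
An operator `W` of order `≤ 1` with unit leading coefficient `h` makes `Y ↦ Y·W + W·Y` a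
"triangular" additive map: it raises the order by one and multiplies the leading coefficient
by the unit `2h`. Such a map is injective (compare leading coefficients of a nonzero kernel
element) and surjective: correcting the top coefficient of the error one step at a time gives
a sequence of approximate solutions whose coefficients stabilise, and the coefficientwise limit
solves the equation exactly. For `A = −2c` with `∂c = 0`, multiplication by `c` commutes with
every operator, so `−c·W⁻¹` is the solution.
-/

open Finset

theorem finsum_finsum_eq_sum_sum {α β M : Type*} [AddCommMonoid M] (G : α → β → M)
    (s : Finset α) (t : α → Finset β) (h : ∀ a b, G a b ≠ 0 → a ∈ s ∧ b ∈ t a) :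
    ∑ᶠ (a) (b), G a b = ∑ a ∈ s, ∑ b ∈ t a, G a b := by
  rw [finsum_congr fun a => finsum_eq_sum_of_support_subset _ fun b hb => (h a b hb).2]
  refine finsum_eq_sum_of_support_subset _ fun a ha => ?_
  obtain ⟨b, -, hb⟩ := exists_ne_zero_of_sum_ne_zero ha
  exact (h a b hb).1

namespace PDO

variable {R : Type} [CommRing R] [Algebra ℚ R] {d : R →+ R}

attribute [ext] ext'

@[simp] theorem zero_coeff (n : ℤ) : (0 : PDO R d).coeff n = 0 := rfl
@[simp] theorem one_coeff (n : ℤ) : (1 : PDO R d).coeff n = if n = 0 then 1 else 0 := rfl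
@[simp] theorem add_coeff (A B : PDO R d) (n : ℤ) : (A + B).coeff n = A.coeff n + B.coeff n := rfl
@[simp] theorem neg_coeff (A : PDO R d) (n : ℤ) : (-A).coeff n = -A.coeff n := rfl
@[simp] theorem sub_coeff (A B : PDO R d) (n : ℤ) : (A - B).coeff n = A.coeff n - B.coeff n :=
  (sub_eq_add_neg _ _).symm
@[simp] theorem mono_coeff (r : R) (k n : ℤ) :
    (mono r k : PDO R d).coeff n = if n = k then r else 0 := rfl
@[simp] theorem const_coeff (c : R) (n : ℤ) :
    (const c : PDO R d).coeff n = if n = 0 then c else 0 := rfl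

def OrderLE (A : PDO R d) (n : ℤ) : Prop := ∀ m, n < m → A.coeff m = 0

theorem OrderLE.trans_le {A : PDO R d} {n n' : ℤ} (hA : A.OrderLE n) (h : n ≤ n') :
    A.OrderLE n' :=
  fun m hm => hA m (h.trans_lt hm)

theorem OrderLE.add {A B : PDO R d} {n : ℤ} (hA : A.OrderLE n) (hB : B.OrderLE n) :
    (A + B).OrderLE n :=
  fun m hm => by rw [add_coeff, hA m hm, hB m hm, add_zero]

theorem OrderLE.sub {A B : PDO R d} {n : ℤ} (hA : A.OrderLE n) (hB : B.OrderLE n) :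
    (A - B).OrderLE n :=
  fun m hm => by rw [sub_coeff, hA m hm, hB m hm, sub_zero]

theorem OrderLE.sub_of_coeff_eq {A B : PDO R d} {n : ℤ} (hA : A.OrderLE n) (hB : B.OrderLE n)
    (h : A.coeff n = B.coeff n) : (A - B).OrderLE (n - 1) := fun m hm => by
  by_cases hmn : m = n
  · rw [hmn, sub_coeff, h, sub_self]
  · exact (hA.sub hB) m (by omega)

theorem orderLE_mono (r : R) (k : ℤ) : (mono r k : PDO R d).OrderLE k :=
  fun _ hm => if_neg hm.ne'

theorem orderLE_const (c : R) : (const c : PDO R d).OrderLE 0 :=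
  orderLE_mono c 0

theorem eq_zero_of_forall_orderLE {A : PDO R d} (h : ∀ n, A.OrderLE n) : A = 0 := by
  ext n
  exact h (n - 1) n (by omega)

theorem exists_orderLE_coeff_ne_zero {A : PDO R d} (hA : A ≠ 0) :
    ∃ n, A.OrderLE n ∧ A.coeff n ≠ 0 := by
  obtain ⟨N, hN⟩ := A.bdd
  have hne : ∃ n, A.coeff n ≠ 0 := by
    by_contra! h
    exact hA (ext' (funext h))
  obtain ⟨n, hn, hmax⟩ := Int.exists_greatest_of_bdd
    ⟨N, fun m hm => not_lt.1 fun h => hm (hN m h)⟩ hne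
  exact ⟨n, fun m hm => not_not.1 fun h => (hmax m h).not_gt hm, hn⟩

theorem gbinom_zero_left {l : ℕ} (hl : 0 < l) : gbinom 0 l = 0 := by
  rw [gbinom, prod_eq_zero (mem_range.2 hl) (by norm_num), zero_div]

def mulTerm (A B : PDO R d) (n k m : ℤ) : R :=
  A.coeff k * (gbinom k (k + m - n).toNat • d^[(k + m - n).toNat] (B.coeff m))

theorem mul_coeff {A B : PDO R d} {a b : ℤ} (hA : A.OrderLE a) (hB : B.OrderLE b) (n : ℤ) :
    (A * B).coeff n = ∑ k ∈ Icc (n - b) a, ∑ m ∈ Icc (n - k) b, mulTerm A B n k m := by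
  change ∑ᶠ (k) (m), (if _ : 0 ≤ k + m - n then mulTerm A B n k m else 0) = _
  rw [finsum_finsum_eq_sum_sum _ _ _ fun k m hne => ?_]
  · refine sum_congr rfl fun k _ => sum_congr rfl fun m hm => dif_pos ?_
    rw [mem_Icc] at hm
    omega
  split_ifs at hne
  · have hk : k ≤ a := not_lt.1 fun hk => hne (by simp [mulTerm, hA k hk])
    have hm : m ≤ b := not_lt.1 fun hm => hne (by simp [mulTerm, hB m hm])
    simp only [mem_Icc]
    omega
  · exact absurd rfl hne

theorem OrderLE.mul {A B : PDO R d} {a b : ℤ} (hA : A.OrderLE a) (hB : B.OrderLE b) :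
    (A * B).OrderLE (a + b) := fun n hn => by
  rw [mul_coeff hA hB, Icc_eq_empty (by omega), sum_empty]

theorem coeff_mul_of_orderLE {A B : PDO R d} {a b : ℤ} (hA : A.OrderLE a) (hB : B.OrderLE b) :
    (A * B).coeff (a + b) = A.coeff a * B.coeff b := by
  rw [mul_coeff hA hB, add_sub_cancel_right, Icc_self, sum_singleton, add_sub_cancel_left,
    Icc_self, sum_singleton]
  simp [mulTerm, gbinom]

theorem add_mul (A B C : PDO R d) : (A + B) * C = A * C + B * C := by
  obtain ⟨a, hA⟩ := A.bdd; obtain ⟨b, hB⟩ := B.bdd; obtain ⟨c, hC⟩ := C.bdd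
  have hA' : A.OrderLE (max a b) := OrderLE.trans_le hA (le_max_left a b)
  have hB' : B.OrderLE (max a b) := OrderLE.trans_le hB (le_max_right a b)
  ext n
  simp only [add_coeff, mul_coeff (hA'.add hB') hC, mul_coeff hA' hC, mul_coeff hB' hC,
    ← sum_add_distrib, mulTerm, add_coeff, _root_.add_mul]

theorem mul_add (A B C : PDO R d) : A * (B + C) = A * B + A * C := by
  obtain ⟨a, hA⟩ := A.bdd; obtain ⟨b, hB⟩ := B.bdd; obtain ⟨c, hC⟩ := C.bdd
  have hB' : B.OrderLE (max b c) := OrderLE.trans_le hB (le_max_left b c)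
  have hC' : C.OrderLE (max b c) := OrderLE.trans_le hC (le_max_right b c)
  ext n
  simp only [add_coeff, mul_coeff hA (hB'.add hC'), mul_coeff hA hB', mul_coeff hA hC',
    ← sum_add_distrib, mulTerm, add_coeff, iterate_map_add, smul_add, _root_.mul_add]

theorem const_mul_coeff (c : R) (B : PDO R d) (n : ℤ) :
    (const c * B).coeff n = c * B.coeff n := by
  obtain ⟨b, hB⟩ := B.bdd
  rw [mul_coeff (orderLE_const c) hB, sum_eq_single 0, sum_eq_single n]
  · simp [mulTerm, const, gbinom]
  · intro m hm hmn
    rw [mem_Icc] at hm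
    rw [mulTerm, gbinom_zero_left (by omega), zero_smul, mul_zero]
  · intro hn
    rw [mem_Icc, not_and_or] at hn
    rw [mulTerm, hB n (by omega), iterD_zero, smul_zero, mul_zero]
  · intro k _ hk
    exact sum_eq_zero fun m _ => by simp [mulTerm, const, hk]
  · intro h0
    rw [mem_Icc] at h0
    rw [Icc_eq_empty (by omega), sum_empty]


theorem const_mul_one (c : R) : (const c : PDO R d) * 1 = const c := by
  ext n
  rw [const_mul_coeff, one_coeff, const_coeff, mul_ite, mul_one, mul_zero]

theorem const_mul_mul (c : R) (B C : PDO R d) : const c * B * C = const c * (B * C) := by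
  obtain ⟨b, hB⟩ := B.bdd; obtain ⟨_, hC⟩ := C.bdd
  have hcB : (const c * B).OrderLE b := fun m hm => by rw [const_mul_coeff, hB m hm, mul_zero]
  ext n
  simp only [const_mul_coeff, mul_coeff hcB hC, mul_coeff hB hC, mul_sum, mulTerm, mul_assoc]

theorem _root_.Leibniz.iterate_mul_left {c : R} (hd : Leibniz d) (hc : d c = 0) (l : ℕ)
    (x : R) : d^[l] (c * x) = c * d^[l] x := by
  induction l generalizing x with
  | zero => rfl
  | succ l ih => rw [Function.iterate_succ_apply, Function.iterate_succ_apply, hd, hc,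
      mul_zero, add_zero, ih]

theorem mul_const_mul {c : R} (hd : Leibniz d) (hc : d c = 0) (A B : PDO R d) :
    A * (const c * B) = const c * (A * B) := by
  obtain ⟨a, hA⟩ := A.bdd; obtain ⟨b, hB⟩ := B.bdd
  have hcB : (const c * B).OrderLE b := fun m hm => by rw [const_mul_coeff, hB m hm, mul_zero]
  ext n
  simp only [const_mul_coeff, mul_coeff hA hcB, mul_coeff hA hB, mul_sum, mulTerm,
    hd.iterate_mul_left hc, mul_smul_comm, mul_left_comm]

noncomputable def anticomm (W : PDO R d) : PDO R d →+ PDO R d :=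
  AddMonoidHom.mk' (fun Y => Y * W + W * Y) fun Y Z => by
    rw [add_mul, mul_add]
    abel

theorem anticomm_apply (W Y : PDO R d) : anticomm W Y = Y * W + W * Y := rfl

section Triangular

variable {Φ : PDO R d →+ PDO R d} {u : R}

def RaisesOrder (Φ : PDO R d →+ PDO R d) (u : R) : Prop :=
  ∀ (Z : PDO R d) (n : ℤ), Z.OrderLE n →
    (Φ Z).OrderLE (n + 1) ∧ (Φ Z).coeff (n + 1) = u * Z.coeff n

theorem RaisesOrder.injective (hΦ : RaisesOrder Φ u) (hu : IsUnit u) : Function.Injective Φ := by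
  refine (injective_iff_map_eq_zero Φ).2 fun Z hZ => ?_
  by_contra hne
  obtain ⟨n, hn, hZn⟩ := exists_orderLE_coeff_ne_zero hne
  have hlead := (hΦ Z n hn).2
  rw [hZ, zero_coeff, eq_comm, hu.mul_right_eq_zero] at hlead
  exact hZn hlead

theorem exists_limit_of_orderLE_succ_sub (Y : ℕ → PDO R d) (N : ℤ)
    (hY : ∀ j : ℕ, (Y (j + 1) - Y j).OrderLE (N - j - 1)) :
    ∃ L : PDO R d, ∀ j : ℕ, (L - Y j).OrderLE (N - j - 1) := by
  have stable : ∀ j i : ℕ, j ≤ i → ∀ m, N - j ≤ m → (Y i).coeff m = (Y j).coeff m := by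
    intro j i hji
    induction i, hji using Nat.le_induction with
    | base => exact fun _ _ => rfl
    | succ i hji ih =>
      intro m hm
      rw [← ih m hm, ← sub_eq_zero, ← sub_coeff]
      exact hY i m (by omega)
  obtain ⟨N₀, h₀⟩ := (Y 0).bdd
  refine ⟨⟨fun m => (Y (N - m).toNat).coeff m, max N N₀, fun m hm => ?_⟩, fun j m hm => ?_⟩
  · rw [show (N - m).toNat = 0 by omega]
    exact h₀ m (by omega)
  · rw [sub_coeff, sub_eq_zero]
    exact (stable _ j (by omega) m (by omega)).symm

theorem RaisesOrder.orderLE_sub_map_add_mono (hΦ : RaisesOrder Φ u) (hu : IsUnit u)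
    {A Y : PDO R d} {n : ℤ} (h : (A - Φ Y).OrderLE n) :
    (A - Φ (Y + mono (↑hu.unit⁻¹ * (A - Φ Y).coeff n) (n - 1))).OrderLE (n - 1) := by
  obtain ⟨hlow, hlead⟩ := hΦ _ _ (orderLE_mono (↑hu.unit⁻¹ * (A - Φ Y).coeff n) (n - 1))
  rw [sub_add_cancel] at hlow hlead
  rw [map_add, ← sub_sub]
  refine h.sub_of_coeff_eq hlow ?_
  rw [hlead, mono_coeff, if_pos rfl, ← mul_assoc, hu.mul_val_inv, one_mul]

theorem RaisesOrder.surjective (hΦ : RaisesOrder Φ u) (hu : IsUnit u) :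
    Function.Surjective Φ := by
  intro A
  obtain ⟨N, hN⟩ := A.bdd
  let Y : ℕ → PDO R d := fun j => j.rec 0 fun j Yj =>
    Yj + mono (↑hu.unit⁻¹ * (A - Φ Yj).coeff (N - j)) (N - j - 1)
  have hY : ∀ j : ℕ, (A - Φ (Y j)).OrderLE (N - j) := by
    intro j
    induction j with
    | zero =>
      change (A - Φ 0).OrderLE (N - 0)
      rwa [map_zero, sub_zero, sub_zero]
    | succ j ih =>
      rw [Nat.cast_succ, ← sub_sub]
      exact hΦ.orderLE_sub_map_add_mono hu ih
  obtain ⟨L, hL⟩ := exists_limit_of_orderLE_succ_sub Y N fun j => by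
    simpa [Y] using
      orderLE_mono (d := d) (↑hu.unit⁻¹ * (A - Φ (Y j)).coeff (N - j)) (N - j - 1)
  refine ⟨L, (sub_eq_zero.1 (eq_zero_of_forall_orderLE fun n => ?_)).symm⟩
  have hdiff : A - Φ L = (A - Φ (Y (N - n).toNat)) - Φ (L - Y (N - n).toNat) := by
    rw [map_sub]
    abel
  have hcorr := (hΦ _ _ (hL (N - n).toNat)).1
  rw [sub_add_cancel] at hcorr
  rw [hdiff]
  exact ((hY _).sub hcorr).trans_le (by omega)

theorem RaisesOrder.bijective (hΦ : RaisesOrder Φ u) (hu : IsUnit u) : Function.Bijective Φ :=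
  ⟨hΦ.injective hu, hΦ.surjective hu⟩

end Triangular

theorem raisesOrder_anticomm {W : PDO R d} (hW : W.OrderLE 1) :
    RaisesOrder (anticomm W) (2 * W.coeff 1) := fun Z n hZ => by
  have hWZ := coeff_mul_of_orderLE hW hZ
  rw [add_comm] at hWZ
  refine ⟨(hZ.mul hW).add (add_comm 1 n ▸ hW.mul hZ), ?_⟩
  rw [anticomm_apply, add_coeff, coeff_mul_of_orderLE hZ hW, hWZ]
  ring

end PDO

theorem anticommutator_equation_general
    (R : Type) [CommRing R] [Algebra ℚ R] (d : R →+ R)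
    (hd : Leibniz d) (h : Rˣ)
    (W Winv : PDO R d)
    (hW1 : W.coeff 1 = (h : R)) (hW2 : ∀ k : ℤ, 1 < k → W.coeff k = 0)
    (hWinv : W * Winv = 1 ∧ Winv * W = 1) :
    (∀ A : PDO R d, ∃! Y : PDO R d, Y * W + W * Y = A) ∧
    (∀ c : R, d c = 0 →
      (-(PDO.const c * Winv)) * W + W * (-(PDO.const c * Winv)) = PDO.const (-(2 * c))) := by
  have hunit : IsUnit (2 * W.coeff 1) := by
    refine IsUnit.mul ?_ (hW1 ▸ h.isUnit)
    simpa only [map_ofNat] using (IsUnit.mk0 (2 : ℚ) two_ne_zero).map (algebraMap ℚ R)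
  refine ⟨((PDO.raisesOrder_anticomm hW2).bijective hunit).existsUnique, fun c hc => ?_⟩
  rw [← PDO.anticomm_apply, map_neg, PDO.anticomm_apply, PDO.const_mul_mul,
    PDO.mul_const_mul hd hc, hWinv.2, hWinv.1, PDO.const_mul_one]
  ext n
  simp only [PDO.neg_coeff, PDO.add_coeff, PDO.const_coeff]
  split_ifs <;> ring

/-- For every `A` the equation `Y·L^(1/2) + L^(1/2)·Y = A` has a unique solution `Y`;
for `A = −2c` with `∂c = 0` the solution is `Y = −cL^(−1/2)`. -/
theorem anticommutator_equation
    (R : Type) [CommRing R] [Algebra ℚ R] (d : R →+ R)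
    (hd : Leibniz d) (h : Rˣ) (hdh : d (h : R) = 0)
    (u : R) (W Winv : PDO R d)
    (hW1 : W.coeff 1 = (h : R)) (hW2 : ∀ k : ℤ, 1 < k → W.coeff k = 0)
    (hW3 : W * W = PDO.Lop h u)
    (hWinv : W * Winv = 1 ∧ Winv * W = 1) :
    (∀ A : PDO R d, ∃! Y : PDO R d, Y * W + W * Y = A) ∧
    (∀ c : R, d c = 0 →
      (-(PDO.const c * Winv)) * W + W * (-(PDO.const c * Winv)) = PDO.const (-(2 * c))) :=
  anticommutator_equation_general R d hd h W Winv hW1 hW2 hWinv
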